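/- arXiv:2603.27544 — 3 statements merged into one kernel-verified Lean document; each statement's English description precedes it below -/
import Mathlib

section
/- Fix a positive integer K, an index k ∈ {1,…,K}, a vector h ∈ ℂ^N, vectors v_1,…,v_K ∈ ℂ^M, and σ² > 0. For θ ∈ ℝ define the SINR γ(θ) = |h^H G(θ) v_k|² / ( Σ_{i≠k} |h^H G(θ) v_i|² + σ² ). Then γ is differentiable at every θ ∈ ℝ with derivative γ'(θ) = 2 ϱ(θ) · ( γ(θ) · Σ_{i≠k} ψ_i(θ) − ψ_k(θ) ), where ϱ(θ) = 1 / ( Σ_{i≠k} |h^H G(θ) v_i|² + σ² ) and ψ_i(θ) = Im[ e^{iθ} · conj(h^H G(θ) v_i) · ( h^H G_L E_{n,n} G_R v_i ) ] for each i ∈ {1,…,K}. -/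
/-! Only the `n`-th diagonal entry of `D θ` depends on `θ`, so each received amplitude is affine
in the phase factor, `f i θ = e^{iθ} aᵢ + bᵢ` with `aᵢ = hᴴ G_L E_{n,n} G_R vᵢ`. Differentiating
`‖f i θ‖²` then gives `-2 ψ i θ`, and the quotient rule yields the formula for `γ'`. -/

open Matrix Complex ComplexConjugate

namespace Matrix

variable {ι κ μ α : Type*} [DecidableEq ι]

theorem diagonal_update_eq_single_add [AddZeroClass α] (d : ι → α) (i : ι) (z : α) :
    diagonal (Function.update d i z) = single i i z + diagonal (Function.update d i 0) := by
  rw [← diagonal_single, diagonal_add]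
  congr 1
  funext j
  by_cases hj : j = i <;> simp [hj]

theorem dotProduct_mul_diagonal_update_mul_mulVec [Fintype ι] [Fintype κ] [Fintype μ]
    [CommSemiring α] (u : κ → α) (L : Matrix κ ι α) (R : Matrix ι μ α) (v : μ → α)
    (d : ι → α) (i : ι) (z : α) :
    u ⬝ᵥ (L * diagonal (Function.update d i z) * R) *ᵥ v =
      z * (u ⬝ᵥ (L * single i i (1 : α) * R) *ᵥ v) +
        u ⬝ᵥ (L * diagonal (Function.update d i 0) * R) *ᵥ v := by
  have hsingle : single i i z = z • single i i (1 : α) := by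
    rw [smul_single, smul_eq_mul, mul_one]
  rw [diagonal_update_eq_single_add, hsingle, Matrix.mul_add, Matrix.add_mul, Matrix.mul_smul,
    Matrix.smul_mul, add_mulVec, smul_mulVec, dotProduct_add,
    dotProduct_smul, smul_eq_mul]

end Matrix

theorem hasDerivAt_cexp_ofReal_mul_I (θ : ℝ) :
    HasDerivAt (fun t : ℝ => cexp (t * I)) (cexp (θ * I) * I) θ := by
  simpa using ((ofRealCLM.hasDerivAt (x := θ)).mul_const I).cexp

theorem hasDerivAt_norm_sq_cexp_mul_I_mul_add (a b : ℂ) (θ : ℝ) :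
    HasDerivAt (fun t : ℝ => ‖cexp (t * I) * a + b‖ ^ 2)
      (-2 * (cexp (θ * I) * conj (cexp (θ * I) * a + b) * a).im) θ := by
  refine (((hasDerivAt_cexp_ofReal_mul_I θ).mul_const a).add_const b).norm_sq.congr_deriv ?_
  simp only [Complex.inner, mul_re, mul_im, I_re, I_im]
  ring

theorem sinr_deriv_general {N M : ℕ} (n : Fin N)
    (d : Fin N → ℂ) (Gmat_L : Matrix (Fin N) (Fin N) ℂ) (Gmat_R : Matrix (Fin N) (Fin M) ℂ)
    {K : ℕ} (k : Fin K) (h : Fin N → ℂ) (v : Fin K → Fin M → ℂ)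
    (σ2 : ℝ) (hσ : 0 < σ2)
    (D : ℝ → Matrix (Fin N) (Fin N) ℂ)
    (hD : ∀ θ, D θ =
      Matrix.diagonal (fun j => if j = n then Complex.exp (θ * Complex.I) else d j))
    (G : ℝ → Matrix (Fin N) (Fin M) ℂ)
    (hG : ∀ θ, G θ = Gmat_L * D θ * Gmat_R)
    (f : Fin K → ℝ → ℂ)
    (hf : ∀ i θ, f i θ = star h ⬝ᵥ (G θ).mulVec (v i))
    (γ : ℝ → ℝ)
    (hγ : ∀ θ, γ θ = ‖f k θ‖ ^ 2 / (∑ i ∈ Finset.univ.erase k, ‖f i θ‖ ^ 2 + σ2))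
    (ϱ : ℝ → ℝ)
    (hϱ : ∀ θ, ϱ θ = 1 / (∑ i ∈ Finset.univ.erase k, ‖f i θ‖ ^ 2 + σ2))
    (ψ : Fin K → ℝ → ℝ)
    (hψ : ∀ i θ, ψ i θ = (Complex.exp (θ * Complex.I) * starRingEnd ℂ (f i θ) *
        (star h ⬝ᵥ (Gmat_L * Matrix.single n n 1 * Gmat_R).mulVec (v i))).im)
    (θ : ℝ) :
    HasDerivAt γ
      (2 * ϱ θ * (γ θ * (∑ i ∈ Finset.univ.erase k, ψ i θ) - ψ k θ)) θ := by
  have hD_update : ∀ t : ℝ, D t = diagonal (Function.update d n (cexp (t * I))) := by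
    intro t
    rw [hD]
    congr 1
    funext j
    exact (Function.update_apply d n _ j).symm
  have hf_affine : ∀ i, f i = fun t : ℝ => cexp (t * I) *
      (star h ⬝ᵥ (Gmat_L * single n n 1 * Gmat_R) *ᵥ v i) +
        star h ⬝ᵥ (Gmat_L * diagonal (Function.update d n 0) * Gmat_R) *ᵥ v i := by
    intro i
    funext t
    rw [hf, hG, hD_update, dotProduct_mul_diagonal_update_mul_mulVec]
  have hnorm_sq : ∀ i, HasDerivAt (fun t => ‖f i t‖ ^ 2) (-2 * ψ i θ) θ := by
    intro i
    rw [hψ, hf_affine]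
    exact hasDerivAt_norm_sq_cexp_mul_I_mul_add _ _ θ
  have hden : HasDerivAt (fun t => ∑ i ∈ Finset.univ.erase k, ‖f i t‖ ^ 2 + σ2)
      (-2 * ∑ i ∈ Finset.univ.erase k, ψ i θ) θ := by
    rw [Finset.mul_sum]
    exact (HasDerivAt.fun_sum fun i _ => hnorm_sq i).add_const σ2
  have hden_pos : 0 < ∑ i ∈ Finset.univ.erase k, ‖f i θ‖ ^ 2 + σ2 := by positivity
  have hquot := (hnorm_sq k).div hden hden_pos.ne'
  rw [show γ = _ from funext hγ]
  refine hquot.congr_deriv ?_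
  rw [hϱ]
  field_simp
  ring

/-- Theorem 1 of the paper: derivative of the per-user SINR with respect to a
single SIM phase shift. -/
theorem sinr_deriv {N M : ℕ} (hN : 0 < N) (hM : 0 < M) (n : Fin N)
    (d : Fin N → ℂ) (Gmat_L : Matrix (Fin N) (Fin N) ℂ) (Gmat_R : Matrix (Fin N) (Fin M) ℂ)
    {K : ℕ} (hK : 0 < K) (k : Fin K) (h : Fin N → ℂ) (v : Fin K → Fin M → ℂ)
    (σ2 : ℝ) (hσ : 0 < σ2)
    (D : ℝ → Matrix (Fin N) (Fin N) ℂ)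
    (hD : ∀ θ, D θ =
      Matrix.diagonal (fun j => if j = n then Complex.exp (θ * Complex.I) else d j))
    (G : ℝ → Matrix (Fin N) (Fin M) ℂ)
    (hG : ∀ θ, G θ = Gmat_L * D θ * Gmat_R)
    (f : Fin K → ℝ → ℂ)
    (hf : ∀ i θ, f i θ = star h ⬝ᵥ (G θ).mulVec (v i))
    (γ : ℝ → ℝ)
    (hγ : ∀ θ, γ θ = ‖f k θ‖ ^ 2 / (∑ i ∈ Finset.univ.erase k, ‖f i θ‖ ^ 2 + σ2))
    (ϱ : ℝ → ℝ)
    (hϱ : ∀ θ, ϱ θ = 1 / (∑ i ∈ Finset.univ.erase k, ‖f i θ‖ ^ 2 + σ2))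
    (ψ : Fin K → ℝ → ℝ)
    (hψ : ∀ i θ, ψ i θ = (Complex.exp (θ * Complex.I) * starRingEnd ℂ (f i θ) *
        (star h ⬝ᵥ (Gmat_L * Matrix.single n n 1 * Gmat_R).mulVec (v i))).im)
    (θ : ℝ) :
    HasDerivAt γ
      (2 * ϱ θ * (γ θ * (∑ i ∈ Finset.univ.erase k, ψ i θ) - ψ k θ)) θ :=
  sinr_deriv_general n d Gmat_L Gmat_R k h v σ2 hσ D hD G hG f hf γ hγ ϱ hϱ ψ hψ θ
end

section
/- Fix a positive integer K, a vector h ∈ ℂ^N, vectors v_1,…,v_K ∈ ℂ^M, and σ² > 0. For θ ∈ ℝ define z(θ) = ( Σ_{k=1}^K |h^H G(θ) v_k|² + σ² ) / σ² and g(θ) = z(θ) − ln z(θ) − 1. Then g is differentiable at every θ ∈ ℝ with derivative g'(θ) = −(2/σ²) · (1 − 1/z(θ)) · Σ_{k=1}^K Im[ e^{iθ} · conj(h^H G(θ) v_k) · ( h^H G_L E_{n,n} G_R v_k ) ]. -/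
/-!
Writing `D(θ) = D₀ + e^{iθ} E_{n,n}`, each `hᴴ G(θ) v_k` is affine in `e^{iθ}`, say
`a_k + e^{iθ} b_k`. Differentiating `|a + e^{iθ} b|²` gives
`2 Re(conj(a + e^{iθ} b) · i e^{iθ} b) = -2 Im(e^{iθ} conj(a + e^{iθ} b) b)`, and the
chain rule for `u ↦ u - ln u - 1` contributes the factor `1 - 1/z(θ)`.
-/

open Matrix Complex ComplexConjugate

theorem Matrix.diagonal_ite_eq_add_smul_single {ι R : Type*} [DecidableEq ι] [NonAssocSemiring R]
    (i : ι) (d : ι → R) (e : R) :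
    diagonal (fun j => if j = i then e else d j)
      = diagonal (fun j => if j = i then 0 else d j) + e • single i i (1 : R) := by
  rw [smul_single, smul_eq_mul, mul_one, ← diagonal_single, diagonal_add]
  congr 1
  ext j
  by_cases hj : j = i <;> simp [hj]

theorem Matrix.dotProduct_mulVec_mul_add_smul_mul {l m k R : Type*} [Fintype l] [Fintype m]
    [Fintype k] [CommSemiring R] (w : l → R) (L : Matrix l m R) (A B : Matrix m m R)
    (P : Matrix m k R) (v : k → R) (e : R) :
    w ⬝ᵥ (L * (A + e • B) * P) *ᵥ v
      = w ⬝ᵥ (L * A * P) *ᵥ v + e * w ⬝ᵥ (L * B * P) *ᵥ v := by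
  rw [Matrix.mul_add, Matrix.add_mul, add_mulVec, dotProduct_add, Matrix.mul_smul,
    Matrix.smul_mul, smul_mulVec, dotProduct_smul, smul_eq_mul]

theorem hasDerivAt_norm_sq_add_exp_mul_I_mul (a b : ℂ) (θ : ℝ) :
    HasDerivAt (fun t : ℝ => ‖a + exp (t * I) * b‖ ^ 2)
      (-2 * (exp (θ * I) * conj (a + exp (θ * I) * b) * b).im) θ := by
  have hexp : HasDerivAt (fun t : ℝ => exp (t * I)) (exp (θ * I) * I) θ := by
    simpa using ((hasDerivAt_id θ).ofReal_comp.mul_const I).cexp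
  convert ((hexp.mul_const b).const_add a).norm_sq using 1
  rw [Complex.inner]
  simp only [mul_re, mul_im, I_re, I_im]
  ring

theorem HasDerivAt.sub_log_sub_one {f : ℝ → ℝ} {f' x : ℝ} (hf : HasDerivAt f f' x)
    (hx : f x ≠ 0) :
    HasDerivAt (fun t => f t - Real.log (f t) - 1) ((1 - 1 / f x) * f') x :=
  ((hf.fun_sub (hf.log hx)).sub_const 1).congr_deriv (by ring)

theorem warden_kl_deriv_general {N M : ℕ} (n : Fin N)
    (d : Fin N → ℂ) (Gmat_L : Matrix (Fin N) (Fin N) ℂ) (Gmat_R : Matrix (Fin N) (Fin M) ℂ)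
    (D : ℝ → Matrix (Fin N) (Fin N) ℂ)
    (hD : ∀ θ, D θ =
      Matrix.diagonal (fun j => if j = n then Complex.exp (θ * Complex.I) else d j))
    (G : ℝ → Matrix (Fin N) (Fin M) ℂ)
    (hG : ∀ θ, G θ = Gmat_L * D θ * Gmat_R)
    {K : ℕ} (h : Fin N → ℂ) (v : Fin K → Fin M → ℂ)
    (σ2 : ℝ) (hσ : 0 < σ2)
    (z : ℝ → ℝ)
    (hz : ∀ θ, z θ =
      (∑ i : Fin K, ‖star h ⬝ᵥ (G θ).mulVec (v i)‖ ^ 2 + σ2) / σ2)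
    (g : ℝ → ℝ)
    (hg : ∀ θ, g θ = z θ - Real.log (z θ) - 1)
    (θ : ℝ) :
    HasDerivAt g
      (-(2 / σ2) * (1 - 1 / z θ) *
        ∑ i : Fin K,
          (Complex.exp (θ * Complex.I) * starRingEnd ℂ (star h ⬝ᵥ (G θ).mulVec (v i)) *
            (star h ⬝ᵥ (Gmat_L * Matrix.single n n 1 * Gmat_R).mulVec (v i))).im) θ := by
  set a : Fin K → ℂ := fun i =>
    star h ⬝ᵥ (Gmat_L * diagonal (fun j => if j = n then 0 else d j) * Gmat_R) *ᵥ v i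
  set b : Fin K → ℂ := fun i => star h ⬝ᵥ (Gmat_L * single n n 1 * Gmat_R) *ᵥ v i
  have hGv : ∀ t i, star h ⬝ᵥ G t *ᵥ v i = a i + exp (t * I) * b i := fun t i => by
    rw [hG, hD, diagonal_ite_eq_add_smul_single, dotProduct_mulVec_mul_add_smul_mul]
  have hz_eq : z = fun t : ℝ => (∑ i, ‖a i + exp (t * I) * b i‖ ^ 2 + σ2) / σ2 :=
    funext fun t => by simp only [hz, hGv]
  have hz_deriv : HasDerivAt z
      ((∑ i, -2 * (exp (θ * I) * conj (a i + exp (θ * I) * b i) * b i).im) / σ2) θ := by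
    rw [hz_eq]
    exact ((HasDerivAt.fun_sum fun i _ =>
      hasDerivAt_norm_sq_add_exp_mul_I_mul (a i) (b i) θ).add_const σ2).div_const σ2
  have hz_pos : 0 < z θ := by rw [hz]; positivity
  rw [show g = fun t => z t - Real.log (z t) - 1 from funext hg]
  refine (hz_deriv.sub_log_sub_one hz_pos.ne').congr_deriv ?_
  simp only [hGv, ← Finset.mul_sum]
  ring

/-- Equation (36) of the paper: derivative of the warden KL-divergence term
g(θ) = z(θ) − ln z(θ) − 1 with respect to a single SIM phase shift. -/
theorem warden_kl_deriv {N M : ℕ} (hN : 0 < N) (hM : 0 < M) (n : Fin N)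
    (d : Fin N → ℂ) (Gmat_L : Matrix (Fin N) (Fin N) ℂ) (Gmat_R : Matrix (Fin N) (Fin M) ℂ)
    (D : ℝ → Matrix (Fin N) (Fin N) ℂ)
    (hD : ∀ θ, D θ =
      Matrix.diagonal (fun j => if j = n then Complex.exp (θ * Complex.I) else d j))
    (G : ℝ → Matrix (Fin N) (Fin M) ℂ)
    (hG : ∀ θ, G θ = Gmat_L * D θ * Gmat_R)
    {K : ℕ} (hK : 0 < K) (h : Fin N → ℂ) (v : Fin K → Fin M → ℂ)
    (σ2 : ℝ) (hσ : 0 < σ2)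
    (z : ℝ → ℝ)
    (hz : ∀ θ, z θ =
      (∑ i : Fin K, ‖star h ⬝ᵥ (G θ).mulVec (v i)‖ ^ 2 + σ2) / σ2)
    (g : ℝ → ℝ)
    (hg : ∀ θ, g θ = z θ - Real.log (z θ) - 1)
    (θ : ℝ) :
    HasDerivAt g
      (-(2 / σ2) * (1 - 1 / z θ) *
        ∑ i : Fin K,
          (Complex.exp (θ * Complex.I) * starRingEnd ℂ (star h ⬝ᵥ (G θ).mulVec (v i)) *
            (star h ⬝ᵥ (Gmat_L * Matrix.single n n 1 * Gmat_R).mulVec (v i))).im) θ :=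
  warden_kl_deriv_general n d Gmat_L Gmat_R D hD G hG h v σ2 hσ z hz g hg θ
end

section
/- Let c₀, c ∈ ℂ, ω₀ > 0, and let ρ, s, ϖ ∈ ℝ with 0 < s ≤ ϖ. If −(|c₀|²/ω₀²)·ϖ + (2/ω₀)·Re[conj(c₀)·c] ≥ ρ, then |c|²/s ≥ ρ. -/
/-! The left-hand side of the surrogate constraint is the first-order Taylor expansion at `(c₀, ω₀)`
of the jointly convex quadratic-over-linear function `(c, ω) ↦ ‖c‖² / ω`, hence a global
underestimator of it: `‖c‖² / ϖ` is at least the surrogate, and `‖c‖² / s ≥ ‖c‖² / ϖ` as `s ≤ ϖ`. -/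

open RealInnerProductSpace

theorem tangent_mul_eq_sq_norm_sub {E : Type*} [NormedAddCommGroup E] [InnerProductSpace ℝ E]
    (x₀ x : E) {ω₀ : ℝ} (hω₀ : ω₀ ≠ 0) (ω : ℝ) :
    (-(‖x₀‖ ^ 2 / ω₀ ^ 2) * ω + (2 / ω₀) * ⟪x₀, x⟫) * ω
      = ‖x‖ ^ 2 - ‖ω₀ • x - ω • x₀‖ ^ 2 / ω₀ ^ 2 := by
  rw [norm_sub_sq_real, norm_smul, norm_smul, inner_smul_left, inner_smul_right,
    real_inner_comm, Real.norm_eq_abs, Real.norm_eq_abs, mul_pow, mul_pow, sq_abs, sq_abs,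
    conj_trivial]
  field_simp
  ring

theorem tangent_le_sq_norm_div {E : Type*} [NormedAddCommGroup E] [InnerProductSpace ℝ E]
    (x₀ x : E) {ω₀ ω : ℝ} (hω₀ : ω₀ ≠ 0) (hω : 0 < ω) :
    -(‖x₀‖ ^ 2 / ω₀ ^ 2) * ω + (2 / ω₀) * ⟪x₀, x⟫ ≤ ‖x‖ ^ 2 / ω := by
  rw [le_div_iff₀ hω, tangent_mul_eq_sq_norm_sub x₀ x hω₀]
  exact sub_le_self _ (by positivity)

/-- Correctness of the SCA surrogate constraints (22c)–(22d) of the paper. -/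
theorem sca_surrogate_correct (c₀ c : ℂ) (ω₀ : ℝ) (hω₀ : 0 < ω₀)
    (ρ s ϖ : ℝ) (hs : 0 < s) (hsϖ : s ≤ ϖ)
    (hsurr : -(‖c₀‖ ^ 2 / ω₀ ^ 2) * ϖ + (2 / ω₀) * ((starRingEnd ℂ) c₀ * c).re ≥ ρ) :
    ‖c‖ ^ 2 / s ≥ ρ := by
  have hinner : ((starRingEnd ℂ) c₀ * c).re = ⟪c₀, c⟫ := by rw [Complex.inner, mul_comm]
  calc ρ ≤ -(‖c₀‖ ^ 2 / ω₀ ^ 2) * ϖ + (2 / ω₀) * ⟪c₀, c⟫ := hinner ▸ hsurr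
    _ ≤ ‖c‖ ^ 2 / ϖ := tangent_le_sq_norm_div c₀ c hω₀.ne' (hs.trans_le hsϖ)
    _ ≤ ‖c‖ ^ 2 / s := div_le_div_of_nonneg_left (sq_nonneg _) hs hsϖ
end
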